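/- arXiv:1701.02819 — 2 statements merged into one kernel-verified Lean document; each statement's English description precedes it below -/
import Mathlib

section
/- Let V = {1,…,n} be a finite set, let 𝓗 be a finite Tetris hypergraph on V, and for each i ∈ V let 𝓗_i be a finite Tetris hypergraph on a finite set V_i, where the sets V_i are pairwise disjoint. Then the 𝓗-combination of the hypergraphs 𝓗_i, namely the hypergraph on ⋃_{i∈V} V_i whose hyperedges are exactly the sets ⋃_{i∈H} H_i for H ∈ 𝓗 and arbitrary choices H_i ∈ 𝓗_i for i ∈ H, is again a Tetris hypergraph. -/
/-- The minimum excludant of a set of natural numbers. -/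
noncomputable def mex (S : Set ℕ) : ℕ := sInf {n : ℕ | n ∉ S}

open Classical in
/-- The Sprague–Grundy function of the impartial game with move relation `move`
(meaningful when every play is finite, i.e. the reversed move relation is
well-founded): it satisfies `sgFun move x = mex {sgFun move y | move x y}`. -/
noncomputable def sgFun {X : Type*} (move : X → X → Prop) : X → ℕ :=
  if hwf : WellFounded (fun y x => move x y) then
    hwf.fix (fun x ih => mex {v : ℕ | ∃ (y : X) (h : move x y), ih y h = v})
  else fun _ => 0

open Classical in
/-- The Tetris function: the length of a longest play starting at `x`
(meaningful when every play is finite and the game is finitely branching):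
it satisfies `tetrisFun move x = sup {tetrisFun move y + 1 | move x y}`. -/
noncomputable def tetrisFun {X : Type*} (move : X → X → Prop) : X → ℕ :=
  if hwf : WellFounded (fun y x => move x y) then
    hwf.fix (fun x ih => sSup {v : ℕ | ∃ (y : X) (h : move x y), v = ih y h + 1})
  else fun _ => 0

/-- A game is SG decreasing if every move strictly decreases the SG value. -/
def SGDecreasing {X : Type*} (move : X → X → Prop) : Prop :=
  ∀ x y, move x y → sgFun move y < sgFun move x

/-- The move relation of the game `NIM_𝓗` on positions `ℕ^V`. -/
def nimMove {V : Type*} (𝓗 : Set (Finset V)) (x x' : V → ℕ) : Prop :=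
  ∃ H ∈ 𝓗, (∀ i ∈ H, x' i < x i) ∧ ∀ i ∉ H, x' i = x i

/-- A hypergraph is Tetris if `NIM_𝓗` is SG decreasing. -/
def IsTetrisHypergraph {V : Type*} (𝓗 : Set (Finset V)) : Prop :=
  SGDecreasing (nimMove 𝓗)

/-- The move relation of the `𝓗`-combination of the games `move i`. -/
def combMove {V : Type*} {X : V → Type*} (𝓗 : Set (Finset V))
    (move : ∀ i, X i → X i → Prop) (x x' : ∀ i, X i) : Prop :=
  ∃ H ∈ 𝓗, (∀ i ∈ H, move i (x i) (x' i)) ∧ ∀ i ∉ H, x' i = x i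

/-- Condition (*): every nonempty induced subhypergraph has a hyperedge
intersecting all its hyperedges. -/
def CondStar {V : Type*} [DecidableEq V] (𝓗 : Set (Finset V)) : Prop :=
  ∀ S : Finset V, (∃ H ∈ 𝓗, H ⊆ S) →
    ∃ H ∈ 𝓗, H ⊆ S ∧ ∀ H' ∈ 𝓗, H' ⊆ S → (H ∩ H').Nonempty

/-- The `𝓗`-combination of the hypergraphs `𝓚 i`, `i ∈ V`, on the disjoint
union of the ground sets: its hyperedges are the sets `⋃_{i ∈ H} H_i` for
`H ∈ 𝓗` and arbitrary choices `H_i ∈ 𝓚 i`, `i ∈ H`. -/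
def combHyper {V : Type*} {W : V → Type*}
    (𝓗 : Set (Finset V)) (𝓚 : ∀ i, Set (Finset (W i))) :
    Set (Finset (Σ i, W i)) :=
  {E | ∃ H ∈ 𝓗, ∃ f : ∀ i, Finset (W i),
    (∀ i ∈ H, f i ∈ 𝓚 i) ∧ E = H.sigma fun i => f i}

section Aux

lemma mem_of_lt_mex {S : Set ℕ} {v : ℕ} (h : v < mex S) : v ∈ S := by
  by_contra hv
  exact absurd (Nat.sInf_le hv) (by simpa [mex] using h.not_ge)

lemma sgFun_eq {X : Type*} {move : X → X → Prop}
    (hwf : WellFounded (fun y x => move x y)) (x : X) :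
    sgFun move x = mex {v : ℕ | ∃ y, move x y ∧ sgFun move y = v} := by
  have h0 : sgFun move = hwf.fix
      (fun x ih => mex {v : ℕ | ∃ (y : X) (h : move x y), ih y h = v}) := by
    simp only [sgFun, dif_pos hwf]
  conv_lhs => rw [h0, WellFounded.fix_eq]
  congr 1
  ext v
  simp only [Set.mem_setOf_eq, ← h0, exists_prop]

lemma exists_move_sg {X : Type*} {move : X → X → Prop}
    (hwf : WellFounded (fun y x => move x y)) {x : X} {v : ℕ}
    (hv : v < sgFun move x) : ∃ y, move x y ∧ sgFun move y = v := by
  rw [sgFun_eq hwf] at hv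
  exact mem_of_lt_mex hv

lemma sgFun_congr {X Y : Type*} (e : X ≃ Y) (move : X → X → Prop)
    (move' : Y → Y → Prop) (hmove : ∀ a b, move a b ↔ move' (e a) (e b))
    (hwf : WellFounded (fun y x => move x y)) :
    ∀ x, sgFun move' (e x) = sgFun move x := by
  have hwf' : WellFounded (fun y x => move' x y) := by
    refine Subrelation.wf (r := InvImage (fun y x => move x y) e.symm) ?_
      (InvImage.wf _ hwf)
    intro a b h
    exact (hmove (e.symm b) (e.symm a)).mpr (by simpa using h)
  intro x
  refine hwf.induction (C := fun x => sgFun move' (e x) = sgFun move x) x ?_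
  intro x ih
  rw [sgFun_eq hwf, sgFun_eq hwf']
  congr 1
  ext v
  simp only [Set.mem_setOf_eq]
  constructor
  · rintro ⟨y', h1, rfl⟩
    refine ⟨e.symm y', (hmove x _).mpr (by simpa using h1), ?_⟩
    rw [← ih _ ((hmove x _).mpr (by simpa using h1)), Equiv.apply_symm_apply]
  · rintro ⟨y, h1, rfl⟩
    exact ⟨e y, (hmove x y).mp h1, ih y h1⟩

lemma nimMove_sum_lt {V : Type*} [Fintype V] {𝓗 : Set (Finset V)}
    (hne : ∀ H ∈ 𝓗, H.Nonempty) {x x' : V → ℕ} (h : nimMove 𝓗 x x') :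
    ∑ i, x' i < ∑ i, x i := by
  obtain ⟨H, hH, hlt, heq⟩ := h
  obtain ⟨i0, hi0⟩ := hne H hH
  refine Finset.sum_lt_sum (fun i _ => ?_) ⟨i0, Finset.mem_univ _, hlt i0 hi0⟩
  by_cases hi : i ∈ H
  · exact (hlt i hi).le
  · exact (heq i hi).le

lemma nimMove_wf {V : Type*} [Fintype V] {𝓗 : Set (Finset V)}
    (hne : ∀ H ∈ 𝓗, H.Nonempty) :
    WellFounded (fun x' x : V → ℕ => nimMove 𝓗 x x') := by
  refine Subrelation.wf (r := InvImage (· < ·) (fun x : V → ℕ => ∑ i, x i)) ?_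
    (InvImage.wf _ (Nat.lt_wfRel.wf))
  intro a b h
  exact nimMove_sum_lt hne h

/-- Key lemma: the SG function of an `𝓗`-combination of SG-decreasing games is
the SG function of `NIM_𝓗` applied to the vector of component SG values. -/
lemma sg_comb {V : Type*} [Fintype V] {X : V → Type*}
    (𝓗 : Set (Finset V)) (move : ∀ i, X i → X i → Prop)
    (hwfc : WellFounded (fun y x => combMove 𝓗 move x y))
    (hwfH : WellFounded (fun y x : V → ℕ => nimMove 𝓗 x y))
    (hwfi : ∀ i, WellFounded (fun y x => move i x y))
    (hdec : ∀ i, SGDecreasing (move i)) (x : ∀ i, X i) :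
    sgFun (combMove 𝓗 move) x
      = sgFun (nimMove 𝓗) (fun i => sgFun (move i) (x i)) := by
  classical
  refine hwfc.induction (C := fun x => sgFun (combMove 𝓗 move) x
      = sgFun (nimMove 𝓗) (fun i => sgFun (move i) (x i))) x ?_
  intro x ih
  rw [sgFun_eq hwfc, sgFun_eq hwfH]
  congr 1
  ext v
  simp only [Set.mem_setOf_eq]
  constructor
  · rintro ⟨y, hxy, rfl⟩
    obtain ⟨H, hH, hm, he⟩ := hxy
    exact ⟨fun i => sgFun (move i) (y i),
      ⟨H, hH, fun i hi => hdec i _ _ (hm i hi), fun i hi => by simp only [he i hi]⟩,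
      (ih y ⟨H, hH, hm, he⟩).symm⟩
  · rintro ⟨g', ⟨H, hH, hlt, heq⟩, rfl⟩
    have hch : ∀ i ∈ H, ∃ y, move i (x i) y ∧ sgFun (move i) y = g' i :=
      fun i hi => exists_move_sg (hwfi i) (hlt i hi)
    set y : ∀ i, X i :=
      fun i => if hi : i ∈ H then Classical.choose (hch i hi) else x i with hy
    have hmv : combMove 𝓗 move x y := by
      refine ⟨H, hH, fun i hi => ?_, fun i hi => ?_⟩
      · simp only [hy, dif_pos hi]
        exact (Classical.choose_spec (hch i hi)).1
      · simp only [hy, dif_neg hi]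
    refine ⟨y, hmv, ?_⟩
    rw [ih y hmv]
    congr 1
    funext i
    by_cases hi : i ∈ H
    · simp only [hy, dif_pos hi]
      exact (Classical.choose_spec (hch i hi)).2
    · simp only [hy, dif_neg hi]
      exact (heq i hi).symm

/-- Currying positions of the combined NIM game. -/
def curryE {V : Type*} {W : V → Type*} : ((Σ i, W i) → ℕ) ≃ (∀ i, W i → ℕ) where
  toFun z i w := z ⟨i, w⟩
  invFun x p := x p.1 p.2
  left_inv z := funext fun ⟨i, w⟩ => rfl
  right_inv x := rfl

lemma nimMove_combHyper_iff {V : Type*} {W : V → Type*}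
    (𝓗 : Set (Finset V)) (𝓚 : ∀ i, Set (Finset (W i)))
    (z z' : (Σ i, W i) → ℕ) :
    nimMove (combHyper 𝓗 𝓚) z z' ↔
      combMove 𝓗 (fun i => nimMove (𝓚 i)) (curryE z) (curryE z') := by
  classical
  constructor
  · rintro ⟨E, ⟨H, hH, f, hf, rfl⟩, hlt, heq⟩
    refine ⟨H, hH, fun i hi => ⟨f i, hf i hi, fun w hw => ?_, fun w hw => ?_⟩,
      fun i hi => funext fun w => ?_⟩
    · exact hlt ⟨i, w⟩ (Finset.mem_sigma.mpr ⟨hi, hw⟩)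
    · exact heq ⟨i, w⟩ (fun hmem => hw (Finset.mem_sigma.mp hmem).2)
    · exact heq ⟨i, w⟩ (fun hmem => hi (Finset.mem_sigma.mp hmem).1)
  · rintro ⟨H, hH, hm, he⟩
    set f : ∀ i, Finset (W i) :=
      fun i => if hi : i ∈ H then Classical.choose (hm i hi) else ∅ with hfdef
    have hfs : ∀ i (hi : i ∈ H), f i ∈ 𝓚 i ∧
        (∀ w ∈ f i, z' ⟨i, w⟩ < z ⟨i, w⟩) ∧ ∀ w ∉ f i, z' ⟨i, w⟩ = z ⟨i, w⟩ := by
      intro i hi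
      have := Classical.choose_spec (hm i hi)
      simp only [hfdef, dif_pos hi]
      exact ⟨this.1, this.2.1, this.2.2⟩
    refine ⟨H.sigma fun i => f i, ⟨H, hH, f, fun i hi => (hfs i hi).1, rfl⟩,
      ?_, ?_⟩
    · rintro ⟨i, w⟩ hmem
      obtain ⟨hi, hw⟩ := Finset.mem_sigma.mp hmem
      exact (hfs i hi).2.1 w hw
    · rintro ⟨i, w⟩ hmem
      by_cases hi : i ∈ H
      · exact (hfs i hi).2.2 w (fun hw => hmem (Finset.mem_sigma.mpr ⟨hi, hw⟩))
      · exact congrFun (he i hi) w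

end Aux

theorem stmt3 {V : Type*} [Fintype V] {W : V → Type*} [∀ i, Fintype (W i)]
    (𝓗 : Set (Finset V)) (hne : ∀ H ∈ 𝓗, H.Nonempty)
    (𝓚 : ∀ i, Set (Finset (W i))) (hne' : ∀ i, ∀ K ∈ 𝓚 i, K.Nonempty)
    (hT : IsTetrisHypergraph 𝓗) (hTi : ∀ i, IsTetrisHypergraph (𝓚 i)) :
    IsTetrisHypergraph (combHyper 𝓗 𝓚) := by
  classical
  have hneC : ∀ E ∈ combHyper 𝓗 𝓚, E.Nonempty := by
    rintro E ⟨H, hH, f, hf, rfl⟩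
    obtain ⟨i, hi⟩ := hne H hH
    obtain ⟨w, hw⟩ := hne' i (f i) (hf i hi)
    exact ⟨⟨i, w⟩, Finset.mem_sigma.mpr ⟨hi, hw⟩⟩
  have hwfC := nimMove_wf hneC
  have hwfH := nimMove_wf hne
  have hwfi : ∀ i, WellFounded (fun y x => nimMove (𝓚 i) x y) :=
    fun i => nimMove_wf (hne' i)
  have hwfc : WellFounded (fun y x => combMove 𝓗 (fun i => nimMove (𝓚 i)) x y) := by
    refine Subrelation.wf
      (r := InvImage (fun y x => nimMove (combHyper 𝓗 𝓚) x y) curryE.symm) ?_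
      (InvImage.wf _ hwfC)
    intro a b h
    exact (nimMove_combHyper_iff 𝓗 𝓚 _ _).mpr
      (by simpa using h)
  have key : ∀ u : (Σ i, W i) → ℕ, sgFun (nimMove (combHyper 𝓗 𝓚)) u
      = sgFun (nimMove 𝓗) (fun i => sgFun (nimMove (𝓚 i)) (curryE u i)) := by
    intro u
    rw [← sgFun_congr curryE _ (combMove 𝓗 fun i => nimMove (𝓚 i))
      (nimMove_combHyper_iff 𝓗 𝓚) hwfC u]
    exact sg_comb 𝓗 (fun i => nimMove (𝓚 i)) hwfc hwfH hwfi hTi (curryE u)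
  intro z z' hmv
  have hc := (nimMove_combHyper_iff 𝓗 𝓚 z z').mp hmv
  obtain ⟨H, hH, hm, he⟩ := hc
  have hnim : nimMove 𝓗 (fun i => sgFun (nimMove (𝓚 i)) (curryE z i))
      (fun i => sgFun (nimMove (𝓚 i)) (curryE z' i)) :=
    ⟨H, hH, fun i hi => hTi i _ _ (hm i hi), fun i hi => by simp only [he i hi]⟩
  rw [key z, key z']
  exact hT _ _ hnim
end

section
/- Let 𝓗 be a finite hypergraph on a finite set V satisfying condition (*), and let x ∈ ℕ^V be a position with 𝓣_𝓗(x) > 0. Then 𝓗^{x-all} ≠ ∅ and 𝓗^{x-pack} ≠ ∅, and moreover: (i) 𝓣_𝓗(x) > 𝓣_𝓗(x^{s(H)}) ≥ 𝓣_𝓗(x^{f(H)}) ≥ 0 for all H ∈ 𝓗 with H ⊆ supp(x); (ii) 𝓣_𝓗(x^{s(H)}) ≥ 𝓣_𝓗(x) − |H| for all H ∈ 𝓗 with H ⊆ supp(x); (iii) 𝓣_𝓗(x^{s(H)}) = 𝓣_𝓗(x) − 1 for all H ∈ 𝓗^{x-pack}; (iv) 𝓣_𝓗(x^{f(H)}) =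 0 if and only if H ∈ 𝓗^{x-all}; (v) 𝓣_𝓗(x) ≥ 𝓣_𝓗(x − χ({k})) ≥ 𝓣_𝓗(x) − 1 for all k ∈ supp(x). -/
/-- The result of the slow `H`-move: decrease every coordinate in `H` by one. -/
def slowMove {V : Type*} [DecidableEq V] (H : Finset V) (x : V → ℕ) : V → ℕ :=
  fun i => if i ∈ H then x i - 1 else x i

/-- The result of the fast `H`-move: decrease every coordinate in `H` to zero. -/
def fastMove {V : Type*} [DecidableEq V] (H : Finset V) (x : V → ℕ) : V → ℕ :=
  fun i => if i ∈ H then 0 else x i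

/-- `𝓗^{x-all}`: hyperedges contained in the support of `x` that intersect all
hyperedges contained in the support of `x`. -/
def xAll {V : Type*} (𝓗 : Set (Finset V)) (x : V → ℕ) : Set (Finset V) :=
  {H | H ∈ 𝓗 ∧ (∀ i ∈ H, 0 < x i) ∧
    ∀ H' ∈ 𝓗, (∀ i ∈ H', 0 < x i) → ∃ i, i ∈ H ∧ i ∈ H'}

/-- An `x`-vector: a multiplicity vector supported on `𝓗` whose combination is
at most `x` and whose total sum is the Tetris value of `x`. -/
def IsXVector {V : Type*} [Fintype V] [DecidableEq V] (𝓗 : Set (Finset V))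
    (x : V → ℕ) (m : Finset V → ℕ) : Prop :=
  (∀ H, H ∉ 𝓗 → m H = 0) ∧
  (∀ i, (∑ H : Finset V, if i ∈ H then m H else 0) ≤ x i) ∧
  (∑ H : Finset V, m H) = tetrisFun (nimMove 𝓗) x

/-- `𝓗^{x-pack}`: hyperedges appearing with positive multiplicity in some
`x`-vector. -/
def xPack {V : Type*} [Fintype V] [DecidableEq V] (𝓗 : Set (Finset V))
    (x : V → ℕ) : Set (Finset V) :=
  {H | ∃ m : Finset V → ℕ, IsXVector 𝓗 x m ∧ 0 < m H}

section Aux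
variable {V : Type*} [Fintype V] [DecidableEq V] (𝓗 : Set (Finset V))

theorem nim_sum_lt (hne : ∀ H ∈ 𝓗, H.Nonempty) {x y : V → ℕ} (h : nimMove 𝓗 x y) :
    (∑ i, y i) < ∑ i, x i := by
  obtain ⟨H, hH, hlt, heq⟩ := h
  obtain ⟨i0, hi0⟩ := hne H hH
  refine Finset.sum_lt_sum (fun i _ => ?_) ⟨i0, Finset.mem_univ _, hlt i0 hi0⟩
  by_cases hi : i ∈ H
  · exact le_of_lt (hlt i hi)
  · exact le_of_eq (heq i hi)

theorem nimWF (hne : ∀ H ∈ 𝓗, H.Nonempty) :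
    WellFounded (fun y x : V → ℕ => nimMove 𝓗 x y) :=
  Subrelation.wf (fun {a b} h => nim_sum_lt 𝓗 hne h)
    (InvImage.wf (fun z : V → ℕ => ∑ i, z i) (Nat.lt_wfRel.wf))

theorem tetris_eq (hne : ∀ H ∈ 𝓗, H.Nonempty) (x : V → ℕ) :
    tetrisFun (nimMove 𝓗) x =
      sSup {v : ℕ | ∃ y, nimMove 𝓗 x y ∧ v = tetrisFun (nimMove 𝓗) y + 1} := by
  have hwf : WellFounded (fun y x : V → ℕ => nimMove 𝓗 x y) := nimWF 𝓗 hne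
  have hdef : tetrisFun (nimMove 𝓗) =
      hwf.fix (fun x ih => sSup {v : ℕ | ∃ (y : V → ℕ) (h : nimMove 𝓗 x y), v = ih y h + 1}) :=
    dif_pos hwf
  rw [hdef, WellFounded.fix_eq]
  simp only [exists_prop]


theorem tetris_le_sum (hne : ∀ H ∈ 𝓗, H.Nonempty) (x : V → ℕ) :
    tetrisFun (nimMove 𝓗) x ≤ ∑ i, x i := by
  induction x using (nimWF 𝓗 hne).induction with
  | _ x ih =>
    rw [tetris_eq 𝓗 hne x]
    apply csSup_le'
    rintro v ⟨y, hy, rfl⟩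
    have h1 := ih y hy
    have h2 := nim_sum_lt 𝓗 hne hy
    omega

theorem moveSet_bdd (hne : ∀ H ∈ 𝓗, H.Nonempty) (x : V → ℕ) :
    BddAbove {v : ℕ | ∃ y, nimMove 𝓗 x y ∧ v = tetrisFun (nimMove 𝓗) y + 1} := by
  refine ⟨∑ i, x i, ?_⟩
  rintro v ⟨y, hy, rfl⟩
  have h1 := tetris_le_sum 𝓗 hne y
  have h2 := nim_sum_lt 𝓗 hne hy
  omega

theorem move_le (hne : ∀ H ∈ 𝓗, H.Nonempty) {x y : V → ℕ} (h : nimMove 𝓗 x y) :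
    tetrisFun (nimMove 𝓗) y + 1 ≤ tetrisFun (nimMove 𝓗) x := by
  rw [tetris_eq 𝓗 hne x]
  exact le_csSup (moveSet_bdd 𝓗 hne x) ⟨y, h, rfl⟩

theorem exists_opt (hne : ∀ H ∈ 𝓗, H.Nonempty) {x : V → ℕ}
    (hx : 0 < tetrisFun (nimMove 𝓗) x) :
    ∃ y, nimMove 𝓗 x y ∧ tetrisFun (nimMove 𝓗) x = tetrisFun (nimMove 𝓗) y + 1 := by
  have hS := tetris_eq 𝓗 hne x
  have hSne : {v : ℕ | ∃ y, nimMove 𝓗 x y ∧ v = tetrisFun (nimMove 𝓗) y + 1}.Nonempty := by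
    by_contra h
    rw [Set.not_nonempty_iff_eq_empty] at h
    rw [h, csSup_empty, Nat.bot_eq_zero] at hS
    omega
  have hmem := Nat.sSup_mem hSne (moveSet_bdd 𝓗 hne x)
  rw [← hS] at hmem
  obtain ⟨y, hy, he⟩ := hmem
  exact ⟨y, hy, he⟩

theorem tetris_eq_zero (hne : ∀ H ∈ 𝓗, H.Nonempty) {x : V → ℕ}
    (h : ¬ ∃ y, nimMove 𝓗 x y) : tetrisFun (nimMove 𝓗) x = 0 := by
  rw [tetris_eq 𝓗 hne x]
  have : {v : ℕ | ∃ y, nimMove 𝓗 x y ∧ v = tetrisFun (nimMove 𝓗) y + 1} = ∅ := by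
    ext v
    simp only [Set.mem_setOf_eq, Set.mem_empty_iff_false, iff_false]
    rintro ⟨y, hy, _⟩
    exact h ⟨y, hy⟩
  rw [this, csSup_empty]
  rfl

theorem tetris_mono (hne : ∀ H ∈ 𝓗, H.Nonempty) (x : V → ℕ) :
    ∀ y : V → ℕ, (∀ i, y i ≤ x i) →
      tetrisFun (nimMove 𝓗) y ≤ tetrisFun (nimMove 𝓗) x := by
  induction x using (nimWF 𝓗 hne).induction with
  | _ x ih =>
    intro y hyx
    rcases Nat.eq_zero_or_pos (tetrisFun (nimMove 𝓗) y) with h0 | hpos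
    · omega
    · obtain ⟨y', hmv, heq⟩ := exists_opt 𝓗 hne hpos
      obtain ⟨H, hH, hlt, hoff⟩ := hmv
      set x' : V → ℕ := fun i => if i ∈ H then y' i else x i with hx'
      have hmx : nimMove 𝓗 x x' := by
        refine ⟨H, hH, fun i hi => ?_, fun i hi => ?_⟩
        · simp only [hx', if_pos hi]
          exact lt_of_lt_of_le (hlt i hi) (hyx i)
        · simp only [hx', if_neg hi]
      have hy'x' : ∀ i, y' i ≤ x' i := by
        intro i
        by_cases hi : i ∈ H
        · simp only [hx', if_pos hi]; exact le_refl _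
        · simp only [hx', if_neg hi]; rw [hoff i hi]; exact hyx i
      have h1 := ih x' hmx y' hy'x'
      have h2 := move_le 𝓗 hne hmx
      omega

theorem slow_move {H : Finset V} (hH : H ∈ 𝓗) {x : V → ℕ} (hsupp : ∀ i ∈ H, 0 < x i) :
    nimMove 𝓗 x (slowMove H x) := by
  refine ⟨H, hH, fun i hi => ?_, fun i hi => ?_⟩
  · simp only [slowMove, if_pos hi]
    have := hsupp i hi; omega
  · simp only [slowMove, if_neg hi]

theorem opt_slow (hne : ∀ H ∈ 𝓗, H.Nonempty) {x : V → ℕ}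
    (hx : 0 < tetrisFun (nimMove 𝓗) x) :
    ∃ H ∈ 𝓗, (∀ i ∈ H, 0 < x i) ∧
      tetrisFun (nimMove 𝓗) (slowMove H x) + 1 = tetrisFun (nimMove 𝓗) x := by
  obtain ⟨y, hmv, heq⟩ := exists_opt 𝓗 hne hx
  obtain ⟨H, hH, hlt, hoff⟩ := hmv
  have hsupp : ∀ i ∈ H, 0 < x i := fun i hi => lt_of_le_of_lt (Nat.zero_le _) (hlt i hi)
  refine ⟨H, hH, hsupp, ?_⟩
  have h1 : ∀ i, y i ≤ slowMove H x i := by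
    intro i
    by_cases hi : i ∈ H
    · simp only [slowMove, if_pos hi]; have := hlt i hi; omega
    · simp only [slowMove, if_neg hi]; exact le_of_eq (hoff i hi)
  have h2 := tetris_mono 𝓗 hne (slowMove H x) y h1
  have h3 := move_le 𝓗 hne (slow_move 𝓗 hH hsupp)
  omega


theorem sum_split (f : Finset V → ℕ) (H : Finset V) :
    ∑ H' : Finset V, f H' = (∑ H' ∈ Finset.univ.erase H, f H') + f H :=
  (Finset.sum_erase_add _ _ (Finset.mem_univ H)).symm

/-- Decrementing a packing at an edge `H` with positive multiplicity gives a
packing of `slowMove H x`. -/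
theorem decrement (m : Finset V → ℕ) (x : V → ℕ) (H : Finset V) (hpos : 0 < m H)
    (hbound : ∀ i, (∑ H' : Finset V, if i ∈ H' then m H' else 0) ≤ x i) :
    (∀ i, (∑ H' : Finset V, if i ∈ H' then
        (if H' = H then m H' - 1 else m H') else 0) ≤ slowMove H x i) ∧
    (∑ H' : Finset V, (if H' = H then m H' - 1 else m H')) + 1 = ∑ H' : Finset V, m H' ∧
    (∀ i ∈ H, 0 < x i) := by
  have hsupp : ∀ i ∈ H, 0 < x i := by
    intro i hi
    have h1 := hbound i
    have h2 : (if i ∈ H then m H else 0) ≤ ∑ H' : Finset V, if i ∈ H' then m H' else 0 :=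
      Finset.single_le_sum (f := fun H' => if i ∈ H' then m H' else 0)
        (fun _ _ => Nat.zero_le _) (Finset.mem_univ H)
    rw [if_pos hi] at h2
    omega
  have hagree : ∀ (g : Finset V → ℕ) (i' : V),
      ∑ H' ∈ Finset.univ.erase H, (if i' ∈ H' then (if H' = H then g H' - 1 else g H') else 0)
        = ∑ H' ∈ Finset.univ.erase H, (if i' ∈ H' then g H' else 0) := by
    intro g i'
    refine Finset.sum_congr rfl (fun H' hH' => ?_)
    rw [if_neg (Finset.ne_of_mem_erase hH')]
  refine ⟨?_, ?_, hsupp⟩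
  · intro i
    have h1 := hbound i
    rw [sum_split (fun H' => if i ∈ H' then m H' else 0) H] at h1
    rw [sum_split (fun H' => if i ∈ H' then (if H' = H then m H' - 1 else m H') else 0) H]
    rw [hagree m i]
    by_cases hi : i ∈ H
    · simp only [if_pos hi, eq_self_iff_true, if_true, slowMove] at h1 ⊢
      omega
    · simp only [if_neg hi, slowMove] at h1 ⊢
      omega
  · rw [sum_split m H, sum_split (fun H' => if H' = H then m H' - 1 else m H') H]
    have : ∑ H' ∈ Finset.univ.erase H, (if H' = H then m H' - 1 else m H')
        = ∑ H' ∈ Finset.univ.erase H, m H' :=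
      Finset.sum_congr rfl (fun H' hH' => by rw [if_neg (Finset.ne_of_mem_erase hH')])
    rw [this, if_pos rfl]
    omega

theorem packing_le (hne : ∀ H ∈ 𝓗, H.Nonempty) :
    ∀ (n : ℕ) (m : Finset V → ℕ) (x : V → ℕ), (∑ H : Finset V, m H) = n →
      (∀ H, H ∉ 𝓗 → m H = 0) →
      (∀ i, (∑ H : Finset V, if i ∈ H then m H else 0) ≤ x i) →
      n ≤ tetrisFun (nimMove 𝓗) x := by
  intro n
  induction n with
  | zero => intro m x _ _ _; exact Nat.zero_le _
  | succ n ih =>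
    intro m x hsum hsupp hbound
    have hex : ∃ H : Finset V, m H ≠ 0 := by
      by_contra h
      push_neg at h
      rw [Finset.sum_eq_zero (fun H _ => h H)] at hsum
      omega
    obtain ⟨H, hHm⟩ := hex
    have hH𝓗 : H ∈ 𝓗 := by
      by_contra h
      exact hHm (hsupp H h)
    obtain ⟨hb', hs', hxs⟩ := decrement m x H (Nat.pos_of_ne_zero hHm) hbound
    have hmv := slow_move 𝓗 hH𝓗 hxs
    have h1 := ih (fun H' => if H' = H then m H' - 1 else m H') (slowMove H x)
      (by beta_reduce; omega) (fun H' hH' => by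
        by_cases h : H' = H
        · exact absurd (h ▸ hH') (by simpa using hH𝓗)
        · simp only [if_neg h]; exact hsupp H' hH') hb'
    have h2 := move_le 𝓗 hne hmv
    omega

theorem exists_xvector (hne : ∀ H ∈ 𝓗, H.Nonempty) (x : V → ℕ) :
    ∃ m : Finset V → ℕ, (∀ H, H ∉ 𝓗 → m H = 0) ∧
      (∀ i, (∑ H : Finset V, if i ∈ H then m H else 0) ≤ x i) ∧
      (∑ H : Finset V, m H) = tetrisFun (nimMove 𝓗) x := by
  induction x using (nimWF 𝓗 hne).induction with
  | _ x ih =>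
    rcases Nat.eq_zero_or_pos (tetrisFun (nimMove 𝓗) x) with h0 | hpos
    · exact ⟨fun _ => 0, fun _ _ => rfl, fun i => by simp, by simp [h0]⟩
    · obtain ⟨H, hH, hsupp, heq⟩ := opt_slow 𝓗 hne hpos
      obtain ⟨m', hsupp', hbound', hsum'⟩ := ih (slowMove H x) (slow_move 𝓗 hH hsupp)
      refine ⟨fun H' => if H' = H then m' H' + 1 else m' H', fun H' hH' => ?_, fun i => ?_, ?_⟩
      · by_cases h : H' = H
        · exact absurd (h ▸ hH') (by simpa using hH)
        · simp only [if_neg h]; exact hsupp' H' hH'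
      · have hagree : ∑ H' ∈ Finset.univ.erase H,
            (if i ∈ H' then (if H' = H then m' H' + 1 else m' H') else 0)
            = ∑ H' ∈ Finset.univ.erase H, (if i ∈ H' then m' H' else 0) :=
          Finset.sum_congr rfl (fun H' hH' => by rw [if_neg (Finset.ne_of_mem_erase hH')])
        rw [sum_split (fun H' => if i ∈ H' then (if H' = H then m' H' + 1 else m' H') else 0) H,
          hagree]
        have h1 := hbound' i
        rw [sum_split (fun H' => if i ∈ H' then m' H' else 0) H] at h1
        by_cases hi : i ∈ H
        · simp only [if_pos hi, eq_self_iff_true, if_true] at *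
          have hx1 := hsupp i hi
          simp only [slowMove, if_pos hi] at h1
          omega
        · simp only [if_neg hi] at *
          simp only [slowMove, if_neg hi] at h1
          omega
      · rw [sum_split (fun H' => if H' = H then m' H' + 1 else m' H') H]
        have : ∑ H' ∈ Finset.univ.erase H, (if H' = H then m' H' + 1 else m' H')
            = ∑ H' ∈ Finset.univ.erase H, m' H' :=
          Finset.sum_congr rfl (fun H' hH' => by rw [if_neg (Finset.ne_of_mem_erase hH')])
        rw [this, if_pos rfl]
        rw [sum_split m' H] at hsum'
        omega


theorem dec_one (hne : ∀ H ∈ 𝓗, H.Nonempty) (x : V → ℕ) :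
    ∀ k : V, 0 < x k →
      tetrisFun (nimMove 𝓗) x ≤
        tetrisFun (nimMove 𝓗) (fun i => if i = k then x i - 1 else x i) + 1 := by
  induction x using (nimWF 𝓗 hne).induction with
  | _ x ih =>
    intro k hk
    rcases Nat.eq_zero_or_pos (tetrisFun (nimMove 𝓗) x) with h0 | hpos
    · omega
    · obtain ⟨H, hH, hsupp, heq⟩ := opt_slow 𝓗 hne hpos
      set z := slowMove H x with hz
      set x' : V → ℕ := fun i => if i = k then x i - 1 else x i with hx'
      by_cases hkH : k ∈ H
      · by_cases hx2 : 2 ≤ x k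
        · -- k ∈ H, x k ≥ 2
          have hzk : 0 < z k := by simp only [hz, slowMove, if_pos hkH]; omega
          have hsupp' : ∀ i ∈ H, 0 < x' i := by
            intro i hi
            by_cases h : i = k
            · simp only [hx', if_pos h]; subst h; omega
            · simp only [hx', if_neg h]; exact hsupp i hi
          have hcomm : slowMove H x' = fun i => if i = k then z i - 1 else z i := by
            funext i
            by_cases hik : i = k
            · subst hik; simp [slowMove, hx', hz, hkH]
            · by_cases hiH : i ∈ H <;> simp [slowMove, hx', hz, hiH, hik]
          have h1 := ih z (slow_move 𝓗 hH hsupp) k hzk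
          have h2 := move_le 𝓗 hne (slow_move 𝓗 hH hsupp')
          rw [hcomm] at h2
          omega
        · -- k ∈ H, x k = 1 : z ≤ x'
          have hle : ∀ i, z i ≤ x' i := by
            intro i
            by_cases hik : i = k
            · subst hik
              simp only [hz, slowMove, hx', if_pos hkH, if_pos rfl]
              omega
            · simp only [hx', if_neg hik, hz, slowMove]
              by_cases hiH : i ∈ H <;> simp [hiH] <;> omega
          have h1 := tetris_mono 𝓗 hne x' z hle
          omega
      · -- k ∉ H
        have hzk : 0 < z k := by simp only [hz, slowMove, if_neg hkH]; omega
        have hsupp' : ∀ i ∈ H, 0 < x' i := by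
          intro i hi
          have hik : i ≠ k := fun h => hkH (h ▸ hi)
          simp only [hx', if_neg hik]
          exact hsupp i hi
        have hcomm : slowMove H x' = fun i => if i = k then z i - 1 else z i := by
          funext i
          by_cases hik : i = k
          · subst hik; simp [slowMove, hx', hz, hkH]
          · by_cases hiH : i ∈ H <;> simp [slowMove, hx', hz, hiH, hik]
        have h1 := ih z (slow_move 𝓗 hH hsupp) k hzk
        have h2 := move_le 𝓗 hne (slow_move 𝓗 hH hsupp')
        rw [hcomm] at h2
        omega

theorem dec_finset (hne : ∀ H ∈ 𝓗, H.Nonempty) (K : Finset V) :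
    ∀ x : V → ℕ, (∀ k ∈ K, 0 < x k) →
      tetrisFun (nimMove 𝓗) x ≤
        tetrisFun (nimMove 𝓗) (fun i => if i ∈ K then x i - 1 else x i) + K.card := by
  induction K using Finset.induction with
  | empty => intro x _; simp
  | @insert a K ha ih =>
    intro x hK
    set x' : V → ℕ := fun i => if i = a then x i - 1 else x i with hx'
    have h1 := dec_one 𝓗 hne x a (hK a (Finset.mem_insert_self a K))
    have h2 := ih x' (fun k hk => by
      have hka : k ≠ a := fun h => ha (h ▸ hk)
      simp only [hx', if_neg hka]
      exact hK k (Finset.mem_insert_of_mem hk))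
    have hfun : (fun i => if i ∈ K then x' i - 1 else x' i)
        = fun i => if i ∈ insert a K then x i - 1 else x i := by
      funext i
      by_cases hia : i = a
      · subst hia; simp [hx', ha, Finset.mem_insert]
      · by_cases hiK : i ∈ K <;> simp [hx', hia, hiK, Finset.mem_insert]
    rw [hfun] at h2
    rw [← hx'] at h1
    rw [Finset.card_insert_of_notMem ha]
    omega

end Aux

theorem stmt11 {V : Type*} [Fintype V] [DecidableEq V]
    (𝓗 : Set (Finset V)) (hne : ∀ H ∈ 𝓗, H.Nonempty)
    (hstar : CondStar 𝓗) (x : V → ℕ)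
    (hx : 0 < tetrisFun (nimMove 𝓗) x) :
    (∃ H, H ∈ xAll 𝓗 x) ∧ (∃ H, H ∈ xPack 𝓗 x) ∧
    (∀ H ∈ 𝓗, (∀ i ∈ H, 0 < x i) →
      tetrisFun (nimMove 𝓗) (slowMove H x) < tetrisFun (nimMove 𝓗) x ∧
      tetrisFun (nimMove 𝓗) (fastMove H x)
        ≤ tetrisFun (nimMove 𝓗) (slowMove H x)) ∧
    (∀ H ∈ 𝓗, (∀ i ∈ H, 0 < x i) →
      tetrisFun (nimMove 𝓗) x - H.card
        ≤ tetrisFun (nimMove 𝓗) (slowMove H x)) ∧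
    (∀ H ∈ xPack 𝓗 x,
      tetrisFun (nimMove 𝓗) (slowMove H x) = tetrisFun (nimMove 𝓗) x - 1) ∧
    (∀ H ∈ 𝓗, (∀ i ∈ H, 0 < x i) →
      (tetrisFun (nimMove 𝓗) (fastMove H x) = 0 ↔ H ∈ xAll 𝓗 x)) ∧
    (∀ k, 0 < x k →
      tetrisFun (nimMove 𝓗) (fun i => if i = k then x i - 1 else x i)
        ≤ tetrisFun (nimMove 𝓗) x ∧
      tetrisFun (nimMove 𝓗) x - 1
        ≤ tetrisFun (nimMove 𝓗) (fun i => if i = k then x i - 1 else x i)) := by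
  refine ⟨?_, ?_, ?_, ?_, ?_, ?_, ?_⟩
  · -- xAll nonempty
    obtain ⟨y, hmv, -⟩ := exists_opt 𝓗 hne hx
    obtain ⟨H0, hH0, hlt0, -⟩ := hmv
    have hH0s : ∀ i ∈ H0, 0 < x i := fun i hi => lt_of_le_of_lt (Nat.zero_le _) (hlt0 i hi)
    obtain ⟨H, hH, hHS, hint⟩ := hstar (Finset.univ.filter (fun i => 0 < x i))
      ⟨H0, hH0, fun i hi => Finset.mem_filter.mpr ⟨Finset.mem_univ i, hH0s i hi⟩⟩
    refine ⟨H, hH, fun i hi => (Finset.mem_filter.mp (hHS hi)).2, fun H' hH' hs' => ?_⟩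
    obtain ⟨i, hi⟩ := hint H' hH'
      (fun i hi' => Finset.mem_filter.mpr ⟨Finset.mem_univ i, hs' i hi'⟩)
    rw [Finset.mem_inter] at hi
    exact ⟨i, hi.1, hi.2⟩
  · -- xPack nonempty
    obtain ⟨m, h1, h2, h3⟩ := exists_xvector 𝓗 hne x
    have hex : ∃ H : Finset V, m H ≠ 0 := by
      by_contra h
      push_neg at h
      rw [Finset.sum_eq_zero (fun H _ => h H)] at h3
      omega
    obtain ⟨H, hH⟩ := hex
    exact ⟨H, m, ⟨h1, h2, h3⟩, Nat.pos_of_ne_zero hH⟩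
  · -- (i)
    intro H hH hs
    have h2 := move_le 𝓗 hne (slow_move 𝓗 hH hs)
    refine ⟨by omega, ?_⟩
    apply tetris_mono 𝓗 hne
    intro i
    by_cases hi : i ∈ H <;> simp [fastMove, slowMove, hi]
  · -- (ii)
    intro H hH hs
    have h2 : tetrisFun (nimMove 𝓗) x ≤ tetrisFun (nimMove 𝓗) (slowMove H x) + H.card :=
      dec_finset 𝓗 hne H x hs
    omega
  · -- (iii)
    intro H hHp
    simp only [xPack, Set.mem_setOf_eq, IsXVector] at hHp
    obtain ⟨m, ⟨hm1, hm2, hm3⟩, hmH⟩ := hHp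
    have hH𝓗 : H ∈ 𝓗 := by
      by_contra h
      rw [hm1 H h] at hmH
      omega
    obtain ⟨hb', hs', hxs⟩ := decrement m x H hmH hm2
    have h1 := packing_le 𝓗 hne (tetrisFun (nimMove 𝓗) x - 1)
      (fun H' => if H' = H then m H' - 1 else m H') (slowMove H x)
      (by beta_reduce; omega)
      (fun H' hH' => by
        by_cases h : H' = H
        · exact absurd (h ▸ hH') (by simpa using hH𝓗)
        · simp only [if_neg h]; exact hm1 H' hH') hb'
    have h2 := move_le 𝓗 hne (slow_move 𝓗 hH𝓗 hxs)
    omega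
  · -- (iv)
    intro H hH hs
    simp only [xAll, Set.mem_setOf_eq]
    constructor
    · intro hzero
      refine ⟨hH, hs, fun H' hH' hs' => ?_⟩
      by_contra h
      push_neg at h
      have hs'' : ∀ i ∈ H', 0 < fastMove H x i := by
        intro i hi
        have hiH : i ∉ H := fun hiH => h i hiH hi
        simp only [fastMove, if_neg hiH]
        exact hs' i hi
      have := move_le 𝓗 hne (slow_move 𝓗 hH' hs'')
      omega
    · rintro ⟨-, -, htr⟩
      apply tetris_eq_zero 𝓗 hne
      rintro ⟨y, H', hH', hlt, -⟩
      have hs' : ∀ i ∈ H', i ∉ H ∧ 0 < x i := by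
        intro i hi
        have hy := hlt i hi
        by_cases hiH : i ∈ H
        · simp [fastMove, hiH] at hy
        · simp only [fastMove, if_neg hiH] at hy
          exact ⟨hiH, lt_of_le_of_lt (Nat.zero_le _) hy⟩
      obtain ⟨i, hiH, hiH'⟩ := htr H' hH' (fun i hi => (hs' i hi).2)
      exact (hs' i hiH').1 hiH
  · -- (v)
    intro k hk
    constructor
    · apply tetris_mono 𝓗 hne
      intro i
      by_cases h : i = k <;> simp [h]
    · have := dec_one 𝓗 hne x k hk
      omega
end
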